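/- arXiv:0904.3169 — 6 statements merged into one kernel-verified Lean document; each statement's English description precedes it below -/
import Mathlib

section
/- Let M ∈ {0,1}^{m×n} be a 0/1 matrix with row sums r_i and column sums s_j, let I be a set of rows and J a set of columns. If ∑_{i∈I} r_i − ∑_{j∉J} s_j = |I|·|J|, then M_{ij} = 1 for every (i,j) ∈ I×J and M_{ij} = 0 for every (i,j) ∈ Ī×J̄ (where Ī, J̄ are the complements of I and J). -/
/-!
Let `A` and `C` count the ones of `M` in `I × J` and in `Iᶜ × Jᶜ`. Splitting the rows of `I` and
the columns of `Jᶜ` along `J` and `I`, the ones in `I × Jᶜ` are counted in both sums and cancel, so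
`∑_{i∈I} r_i − ∑_{j∉J} s_j = A − C`. As `A ≤ |I|·|J|` and `C ≥ 0`, the hypothesis forces
`A = |I|·|J|` and `C = 0`.
-/

open Finset

variable {ι κ : Type*} [Fintype ι] [Fintype κ] [DecidableEq ι] [DecidableEq κ]

theorem sum_sum_sub_sum_compl_sum {G : Type*} [AddCommGroup G] (f : ι → κ → G)
    (I : Finset ι) (J : Finset κ) :
    ∑ i ∈ I, ∑ j, f i j - ∑ j ∈ Jᶜ, ∑ i, f i j =
      ∑ i ∈ I, ∑ j ∈ J, f i j - ∑ i ∈ Iᶜ, ∑ j ∈ Jᶜ, f i j := by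
  rw [sum_comm (s := Jᶜ), ← sum_add_sum_compl I]
  simp only [← sum_add_sum_compl J, sum_add_distrib]
  abel

theorem sum_card_filter_sub_sum_compl_card_filter (p : ι → κ → Prop)
    [∀ i j, Decidable (p i j)] (I : Finset ι) (J : Finset κ) :
    ∑ i ∈ I, (#{j | p i j} : ℤ) - ∑ j ∈ Jᶜ, (#{i | p i j} : ℤ) =
      #{x ∈ I ×ˢ J | p x.1 x.2} - #{x ∈ Iᶜ ×ˢ Jᶜ | p x.1 x.2} := by
  simp only [card_filter, sum_product, Nat.cast_sum, Nat.cast_ite, Nat.cast_one, Nat.cast_zero]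
  exact sum_sum_sub_sum_compl_sum _ I J

theorem forall_mem_and_forall_mem_not_of_card_filter_sub_card_filter_eq {α : Type*}
    {s t : Finset α} {p : α → Prop} [DecidablePred p]
    (h : (#{x ∈ s | p x} : ℤ) - #{x ∈ t | p x} = #s) :
    (∀ x ∈ s, p x) ∧ ∀ x ∈ t, ¬p x := by
  have : #{x ∈ s | p x} ≤ #s := card_filter_le _ _
  obtain ⟨hs, ht⟩ : #{x ∈ s | p x} = #s ∧ #{x ∈ t | p x} = 0 := by omega
  exact ⟨card_filter_eq_iff.mp hs, card_filter_eq_zero_iff.mp ht⟩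

/-- Ryser's separation lemma. For a 0/1 matrix `M` with row sums `r` and
column sums `s`, if `∑_{i∈I} r_i − ∑_{j∉J} s_j = |I|·|J|`, then `M` equals 1 on all of `I×J`
and 0 on all of `Ī×J̄`. -/
theorem stmt_1 (m n : ℕ) (M : Fin m → Fin n → Bool)
    (r : Fin m → ℕ) (s : Fin n → ℕ)
    (hr : ∀ i, r i = (Finset.univ.filter (fun j => M i j = true)).card)
    (hs : ∀ j, s j = (Finset.univ.filter (fun i => M i j = true)).card)
    (I : Finset (Fin m)) (J : Finset (Fin n))
    (h : (∑ i ∈ I, (r i : ℤ)) - ∑ j ∈ Jᶜ, (s j : ℤ) = (I.card : ℤ) * J.card) :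
    (∀ i ∈ I, ∀ j ∈ J, M i j = true) ∧
      (∀ i ∈ Iᶜ, ∀ j ∈ Jᶜ, M i j = false) := by
  simp only [hr, hs] at h
  rw [sum_card_filter_sub_sum_compl_card_filter, ← Nat.cast_mul, ← card_product] at h
  obtain ⟨hones, hzeros⟩ := forall_mem_and_forall_mem_not_of_card_filter_sub_card_filter_eq h
  exact ⟨fun i hi j hj => hones (i, j) (mk_mem_product hi hj),
    fun i hi j hj => by simpa using hzeros (i, j) (mk_mem_product hi hj)⟩
end

section
/- (Ryser's theorem.) Let r ∈ {0,1,…,n}^m be a non-increasing vector and s ∈ {0,1,…,m}^n a vector with ∑_{i=1}^m r_i = ∑_{j=1}^n s_j. Then there exists a matrix M ∈ {0,1}^{m×n} with row sums r and column sums s if and only if r ⪯ s*. -/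
/-!
Double counting gives necessity: the first `ℓ` rows of a 0/1 matrix meet column `j` in at most
`min (s j) ℓ` ones, and `∑_j min (s j) ℓ` is exactly the `ℓ`-th prefix sum of `s*`.
For sufficiency, induct on the number of rows: put the ones of the last (shortest) row into the
columns with the largest sums. Removing that row and lowering those columns by one preserves the
prefix-sum condition, because if some chosen column is short then so is every unchosen one.
-/

def Dominates {n : ℕ} (s t : Fin n → ℕ) : Prop :=
  ∀ ℓ ≤ n, ∑ j ∈ Finset.univ.filter (fun j : Fin n => (j : ℕ) < ℓ), s j ≤
    ∑ j ∈ Finset.univ.filter (fun j : Fin n => (j : ℕ) < ℓ), t j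

/-- The conjugate of a vector `s ∈ {0,…,m}^n` is the vector `s* ∈ {0,…,n}^m` with
`s*_i = |{j : s_j ≥ i}|` (here `i : Fin m` stands for the 1-indexed row `i+1`). -/
def conj (m : ℕ) {n : ℕ} (s : Fin n → ℕ) : Fin m → ℕ :=
  fun i => (Finset.univ.filter (fun j : Fin n => (i : ℕ) + 1 ≤ s j)).card

open Finset

def prefixSum {m : ℕ} (r : Fin m → ℕ) (ℓ : ℕ) : ℕ :=
  ∑ i ∈ univ.filter (fun i : Fin m => (i : ℕ) < ℓ), r i

def HasMargins {m n : ℕ} (M : Fin m → Fin n → Bool) (r : Fin m → ℕ) (s : Fin n → ℕ) :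
    Prop :=
  (∀ i, #{j | M i j = true} = r i) ∧ ∀ j, #{i | M i j = true} = s j

def RyserCondition {m n : ℕ} (r : Fin m → ℕ) (s : Fin n → ℕ) : Prop :=
  ∀ ℓ ≤ m, prefixSum r ℓ ≤ ∑ j, min (s j) ℓ

section PrefixSum

variable {m : ℕ}

lemma prefixSum_succ (r : Fin m → ℕ) {ℓ : ℕ} (hℓ : ℓ < m) :
    prefixSum r (ℓ + 1) = prefixSum r ℓ + r ⟨ℓ, hℓ⟩ := by
  have hfilter : (univ.filter fun i : Fin m => (i : ℕ) < ℓ + 1)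
      = insert ⟨ℓ, hℓ⟩ (univ.filter fun i : Fin m => (i : ℕ) < ℓ) := by
    ext i
    simp only [mem_filter, mem_univ, true_and, mem_insert, Fin.ext_iff]
    omega
  rw [prefixSum, hfilter, sum_insert (by simp), add_comm, prefixSum]

lemma prefixSum_init (r : Fin (m + 1) → ℕ) {ℓ : ℕ} (hℓ : ℓ ≤ m) :
    prefixSum (Fin.init r) ℓ = prefixSum r ℓ := by
  have hfilter : (univ.filter fun i : Fin (m + 1) => (i : ℕ) < ℓ)
      = (univ.filter fun i : Fin m => (i : ℕ) < ℓ).map Fin.castSuccEmb := by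
    ext i
    simp only [mem_filter, mem_univ, true_and, mem_map, Fin.castSuccEmb_apply]
    refine ⟨fun hi => ⟨⟨i, by omega⟩, hi, rfl⟩, ?_⟩
    rintro ⟨i, hi, rfl⟩
    exact hi
  rw [prefixSum, prefixSum, hfilter, sum_map]
  rfl

lemma prefixSum_card_filter {n : ℕ} (R : Fin m → Fin n → Prop) [∀ i j, Decidable (R i j)]
    (ℓ : ℕ) :
    prefixSum (fun i => #{j | R i j}) ℓ
      = ∑ j, #((univ.filter fun i : Fin m => (i : ℕ) < ℓ).filter (R · j)) :=
  sum_card_bipartiteAbove_eq_sum_card_bipartiteBelow R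

lemma prefixSum_conj {n : ℕ} (s : Fin n → ℕ) {ℓ : ℕ} (hℓ : ℓ ≤ m) :
    prefixSum (conj m s) ℓ = ∑ j, min (s j) ℓ := by
  refine (prefixSum_card_filter (fun (i : Fin m) j => (i : ℕ) + 1 ≤ s j) ℓ).trans
    (sum_congr rfl fun j _ => ?_)
  rw [filter_filter, filter_congr (q := fun i : Fin m => (i : ℕ) < min ℓ (s j))
    (fun i _ => by omega), Fin.card_filter_val_lt]
  omega

lemma dominates_conj_iff {n : ℕ} (r : Fin m → ℕ) (s : Fin n → ℕ) :
    Dominates r (conj m s) ↔ RyserCondition r s :=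
  forall₂_congr fun _ hℓ => by rw [← prefixSum_conj s hℓ]; rfl

end PrefixSum

section TopColumns

variable {α : Type*} [Fintype α] [DecidableEq α] {β : Type*} [LinearOrder β]

lemma exists_card_eq_forall_le (f : α → β) {k : ℕ} (hk : k ≤ Fintype.card α) :
    ∃ C : Finset α, #C = k ∧ ∀ a ∈ C, ∀ b ∉ C, f b ≤ f a := by
  induction k with
  | zero => exact ⟨∅, rfl, by simp⟩
  | succ k ih =>
    obtain ⟨C, hC, htop⟩ := ih (by omega)
    have hne : Cᶜ.Nonempty := by
      rw [← card_pos, card_compl]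
      omega
    obtain ⟨a, ha, hamax⟩ := exists_max_image _ f hne
    rw [mem_compl] at ha
    refine ⟨insert a C, by rw [card_insert_of_notMem ha, hC], fun b hb c hc => ?_⟩
    rw [mem_insert, not_or] at hc
    rcases mem_insert.mp hb with rfl | hb
    · exact hamax c (mem_compl.mpr hc.2)
    · exact htop b hb c hc.2

lemma le_of_mem_of_card_le_card_filter {f : α → β} {C : Finset α}
    (htop : ∀ a ∈ C, ∀ b ∉ C, f b ≤ f a) {t : β} (hC : #C ≤ #{a | t ≤ f a}) {a : α}
    (ha : a ∈ C) : t ≤ f a := by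
  by_contra! hlt
  have hsub : ({b | t ≤ f b} : Finset α) ⊆ C.erase a := by
    intro b hb
    rw [mem_filter] at hb
    refine mem_erase.mpr ⟨fun hba => (hba ▸ hlt).not_ge hb.2, ?_⟩
    by_contra hbC
    exact (htop a ha b hbC).not_gt (hlt.trans_le hb.2)
  have := card_le_card hsub
  rw [card_erase_of_mem ha] at this
  have := card_pos.mpr ⟨a, ha⟩
  omega

end TopColumns

section Ryser

variable {m n : ℕ}

lemma HasMargins.ryserCondition {M : Fin m → Fin n → Bool} {r : Fin m → ℕ}
    {s : Fin n → ℕ} (h : HasMargins M r s) : RyserCondition r s := by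
  intro ℓ _
  have hr : r = fun i => #{j | M i j = true} := funext fun i => (h.1 i).symm
  rw [hr, prefixSum_card_filter (fun i j => M i j = true)]
  refine sum_le_sum fun j _ => le_min ?_ ?_
  · exact (h.2 j) ▸ card_le_card (filter_subset_filter _ (filter_subset _ _))
  · exact (card_filter_le _ _).trans <|
      Fin.card_filter_val_lt.trans_le (min_le_right _ _)

lemma HasMargins.snoc {M : Fin m → Fin n → Bool} {r : Fin m → ℕ} {s : Fin n → ℕ}
    (h : HasMargins M r s) (C : Finset (Fin n)) :
    HasMargins (Fin.snoc M fun j => decide (j ∈ C)) (Fin.snoc r #C)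
      (fun j => s j + if j ∈ C then 1 else 0) := by
  refine ⟨Fin.lastCases (by simp) fun i => by simpa using h.1 i, fun j => ?_⟩
  rw [card_filter, Fin.sum_univ_castSucc, ← card_filter]
  simp [h.2 j]

lemma RyserCondition.apply_zero_le_card_filter {r : Fin (m + 1) → ℕ} {s : Fin n → ℕ}
    (h : RyserCondition r s) : r 0 ≤ #{j | 1 ≤ s j} :=
  calc r 0 = prefixSum r 1 := by
        rw [prefixSum_succ r m.succ_pos]
        simp [prefixSum]
    _ ≤ ∑ j, min (s j) 1 := h 1 (by omega)
    _ = #{j | 1 ≤ s j} := by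
        rw [card_filter]
        exact sum_congr rfl fun j _ => by split_ifs <;> omega

lemma RyserCondition.init {r : Fin (m + 1) → ℕ} {s : Fin n → ℕ} (h : RyserCondition r s)
    (hr : Antitone r) {C : Finset (Fin n)} (htop : ∀ j ∈ C, ∀ j' ∉ C, s j' ≤ s j)
    (hC : #C = r (Fin.last m)) :
    RyserCondition (Fin.init r) fun j => if j ∈ C then s j - 1 else s j := by
  intro ℓ hℓ
  rw [prefixSum_init r hℓ]
  by_cases hbig : ∀ j ∈ C, ℓ < s j
  · calc prefixSum r ℓ ≤ ∑ j, min (s j) ℓ := h ℓ (by omega)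
      _ = _ := sum_congr rfl fun j _ => by
        by_cases hj : j ∈ C
        · have := hbig j hj
          simp only [hj, if_true]
          omega
        · simp only [hj, if_false]
  · push Not at hbig
    obtain ⟨c, hc, hcℓ⟩ := hbig
    -- every column outside `C` has sum at most `s c ≤ ℓ`
    have hpt : ∀ j, min (s j) (ℓ + 1)
        ≤ min (if j ∈ C then s j - 1 else s j) ℓ + if j ∈ C then 1 else 0 := by
      intro j
      by_cases hj : j ∈ C
      · simp only [hj, if_true]
        omega
      · have := htop c hc j hj
        simp only [hj, if_false]
        omega
    have hℓ' : ℓ < m + 1 := by omega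
    refine le_of_add_le_add_right (a := #C) ?_
    calc prefixSum r ℓ + #C ≤ prefixSum r ℓ + r ⟨ℓ, hℓ'⟩ := by
          rw [hC]
          exact Nat.add_le_add_left (hr (Fin.le_last _)) _
      _ = prefixSum r (ℓ + 1) := (prefixSum_succ r hℓ').symm
      _ ≤ ∑ j, min (s j) (ℓ + 1) := h (ℓ + 1) hℓ'
      _ ≤ ∑ j, (min (if j ∈ C then s j - 1 else s j) ℓ + if j ∈ C then 1 else 0) :=
          sum_le_sum fun j _ => hpt j
      _ = ∑ j, min (if j ∈ C then s j - 1 else s j) ℓ + #C := by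
          rw [sum_add_distrib]
          simp

theorem exists_hasMargins_of_ryserCondition (r : Fin m → ℕ) (s : Fin n → ℕ)
    (hrle : ∀ i, r i ≤ n) (hr : Antitone r) (hsum : ∑ i, r i = ∑ j, s j)
    (h : RyserCondition r s) : ∃ M, HasMargins M r s := by
  induction m generalizing s with
  | zero =>
    have hs : ∀ j, s j = 0 := fun j =>
      sum_eq_zero_iff.mp (by simpa using hsum.symm) j (mem_univ j)
    exact ⟨fun i => i.elim0, fun i => i.elim0, fun j => by simp [hs j]⟩
  | succ m ih =>
    obtain ⟨C, hC, htop⟩ :=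
      exists_card_eq_forall_le s (k := r (Fin.last m)) (by simpa using hrle _)
    have hs1 : ∀ j ∈ C, 1 ≤ s j := fun j hj => le_of_mem_of_card_le_card_filter htop
      (hC ▸ (hr (Fin.zero_le _)).trans h.apply_zero_le_card_filter) hj
    set s' : Fin n → ℕ := fun j => if j ∈ C then s j - 1 else s j
    have hs : s = fun j => s' j + if j ∈ C then 1 else 0 := by
      funext j
      by_cases hj : j ∈ C
      · have := hs1 j hj
        simp only [s', hj, if_true]
        omega
      · simp [s', hj]
    have hsum' : ∑ i, Fin.init r i = ∑ j, s' j := by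
      rw [Fin.sum_univ_castSucc, hs, sum_add_distrib] at hsum
      simp only [sum_boole, filter_mem_eq_inter, univ_inter, hC] at hsum
      simpa [Fin.init] using hsum
    obtain ⟨M, hM⟩ := ih (Fin.init r) s' (fun i => hrle _)
      (hr.comp_monotone Fin.strictMono_castSucc.monotone) hsum' (h.init hr htop hC)
    have hM' := hM.snoc C
    rw [← hs, hC, Fin.snoc_init_self] at hM'
    exact ⟨_, hM'⟩

end Ryser

theorem stmt_7_general (m n : ℕ) (r : Fin m → ℕ) (s : Fin n → ℕ)
    (hrle : ∀ i, r i ≤ n)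
    (hrmono : ∀ i i' : Fin m, i ≤ i' → r i' ≤ r i)
    (hsum : ∑ i, r i = ∑ j, s j) :
    (∃ M : Fin m → Fin n → Bool,
      (∀ i, (Finset.univ.filter (fun j => M i j = true)).card = r i) ∧
      (∀ j, (Finset.univ.filter (fun i => M i j = true)).card = s j)) ↔
    Dominates r (conj m s) := by
  rw [dominates_conj_iff]
  exact ⟨fun ⟨_, hM⟩ => HasMargins.ryserCondition hM,
    exists_hasMargins_of_ryserCondition r s hrle hrmono hsum⟩

/-- Ryser's theorem. For a non-increasing `r ∈ {0,…,n}^m` and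
`s ∈ {0,…,m}^n` with `∑ r = ∑ s`, there is a 0/1 matrix with row sums `r` and
column sums `s` if and only if `r ⪯ s*`. -/
theorem stmt_7 (m n : ℕ) (r : Fin m → ℕ) (s : Fin n → ℕ)
    (hrle : ∀ i, r i ≤ n) (hsle : ∀ j, s j ≤ m)
    (hrmono : ∀ i i' : Fin m, i ≤ i' → r i' ≤ r i)
    (hsum : ∑ i, r i = ∑ j, s j) :
    (∃ M : Fin m → Fin n → Bool,
      (∀ i, (Finset.univ.filter (fun j => M i j = true)).card = r i) ∧
      (∀ j, (Finset.univ.filter (fun i => M i j = true)).card = s j)) ↔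
    Dominates r (conj m s) :=
  stmt_7_general m n r s hrle hrmono hsum
end

section
/- Let s ∈ {0,1,…,m}^n and let M ∈ {0,1}^{m×n} be any matrix whose row sums equal the conjugate s* and whose column sums equal s. Then M is uniquely determined: M_{ij} = 1 if and only if i ≤ s_j (i.e., in every column j, exactly the first s_j cells are 1). -/
/-!
Induction on the row index `i`. Once the rows above `i` are known to be the initial segments
of the columns, a `1` in row `i` of column `j` sits below all `min i s_j` cells above it, so
column `j` has more than `i` ones and `i + 1 ≤ s_j`. Thus row `i` is supported in
`{j | i + 1 ≤ s_j}`, a set of size `s*_i`, which equals the row sum; hence the two coincide.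
-/

open Finset

theorem Fin.val_lt_card_of_mem {m : ℕ} {t : Finset (Fin m)} {k : Fin m} (hk : k ∈ t)
    (h : ∀ i < k, (i : ℕ) < #t → i ∈ t) : (k : ℕ) < #t := by
  by_contra! hkt
  have hsub : insert k ({i | (i : ℕ) < #t} : Finset (Fin m)) ⊆ t := by
    intro i hi
    rcases mem_insert.mp hi with rfl | hi
    · exact hk
    · have hit : (i : ℕ) < #t := (mem_filter.mp hi).2
      exact h i (Fin.lt_def.mpr (by omega)) hit
  have hcard := card_le_card hsub
  rw [card_insert_of_notMem (by simpa using hkt), Fin.card_filter_val_lt] at hcard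
  have htm : #t ≤ m := (card_le_univ t).trans_eq (Fintype.card_fin m)
  omega

theorem row_support_eq_of_conj {m n : ℕ} {s : Fin n → ℕ} {M : Fin m → Fin n → Bool}
    (hrow : ∀ i, #{j | M i j = true} = conj m s i)
    (hcol : ∀ j, #{i | M i j = true} = s j) (i : Fin m) :
    ({j | M i j = true} : Finset (Fin n)) = ({j | (i : ℕ) + 1 ≤ s j} : Finset (Fin n)) := by
  induction i using WellFoundedLT.induction with
  | _ i ih =>
    have hsub : ({j | M i j = true} : Finset (Fin n)) ⊆ ({j | (i : ℕ) + 1 ≤ s j} : Finset _) := by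
      intro j hj
      have hij : i ∈ ({i' | M i' j = true} : Finset (Fin m)) := by simpa using hj
      have hlt := Fin.val_lt_card_of_mem hij fun i' hi' hi's => by
        have hj' : j ∈ ({j | (i' : ℕ) + 1 ≤ s j} : Finset (Fin n)) := by
          simpa [hcol j] using hi's
        rw [← ih i' hi'] at hj'
        simpa using hj'
      rw [hcol j] at hlt
      simpa using hlt
    exact eq_of_subset_of_card_le hsub (hrow i).ge

theorem stmt_8_general (m n : ℕ) (s : Fin n → ℕ)
    (M : Fin m → Fin n → Bool)
    (hrow : ∀ i, (Finset.univ.filter (fun j => M i j = true)).card = conj m s i)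
    (hcol : ∀ j, (Finset.univ.filter (fun i => M i j = true)).card = s j) :
    ∀ (i : Fin m) (j : Fin n), M i j = true ↔ (i : ℕ) + 1 ≤ s j := by
  intro i j
  simpa using congrArg (j ∈ ·) (row_support_eq_of_conj hrow hcol i)

/-- If a 0/1 matrix `M` has row sums `s*` and column sums `s`, then `M`
is uniquely determined: `M_{ij} = 1` iff `i ≤ s_j` (1-indexed), i.e. in every column `j`
exactly the first `s_j` cells are 1.  (Here rows are 0-indexed, so the condition reads
`i + 1 ≤ s j`.) -/
theorem stmt_8 (m n : ℕ) (s : Fin n → ℕ) (hle : ∀ j, s j ≤ m)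
    (M : Fin m → Fin n → Bool)
    (hrow : ∀ i, (Finset.univ.filter (fun j => M i j = true)).card = conj m s i)
    (hcol : ∀ j, (Finset.univ.filter (fun i => M i j = true)).card = s j) :
    ∀ (i : Fin m) (j : Fin n), M i j = true ↔ (i : ℕ) + 1 ≤ s j :=
  stmt_8_general m n s M hrow hcol
end

section
/- If the gadget instance is feasible, i.e., there exists a matrix M ∈ {R,G,Y}^{n×(2n+2)} such that for each color c ∈ {R,G,Y} row i contains exactly r^c_i entries equal to c and column q contains exactly s^c_q entries equal to c, then α ⪯ β in the dominance order. -/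
/-! The gadget instance of the 3-color tomography problem on an `n × (2n+2)` grid.
Rows `1,…,n` and columns `1,…,2n+2` are 1-indexed.  Colors are encoded as elements of
`Fin 3`: `0 = R` (red), `1 = G` (green), `2 = Y` (yellow). -/

/-- Red row projections: `r^R_i = i+1` if `i ∈ {u,v}` and `i` otherwise. -/
def gadgetRR (u v i : ℕ) : ℕ := if i = u ∨ i = v then i + 1 else i

/-- Green row projections: `r^G_i = i` if `i ∈ {u,v}` and `i+1` otherwise. -/
def gadgetRG (u v i : ℕ) : ℕ := if i = u ∨ i = v then i else i + 1

/-- Yellow row projections: `r^Y_i = 2n+2 − r^R_i − r^G_i`. -/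
def gadgetRY (n u v i : ℕ) : ℕ := 2 * n + 2 - gadgetRR u v i - gadgetRG u v i

/-- Red column projections: `s^R_j = n−j+α_j` for `1 ≤ j ≤ n`, `s^R_{n+1} = 1`,
`s^R_{n+2} = n−k+1`, `s^R_{n+2+j} = 0` for `1 ≤ j ≤ n`. -/
def gadgetSR (n k : ℕ) (α : ℕ → ℕ) (q : ℕ) : ℕ :=
  if q ≤ n then n - q + α q
  else if q = n + 1 then 1
  else if q = n + 2 then n - k + 1
  else 0

/-- Green column projections: `s^G_j = 0` for `1 ≤ j ≤ n`, `s^G_{n+1} = n−1`,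
`s^G_{n+2} = k−1`, `s^G_{n+2+j} = n−j+1−β_j` for `1 ≤ j ≤ n`. -/
def gadgetSG (n k : ℕ) (β : ℕ → ℕ) (q : ℕ) : ℕ :=
  if q ≤ n then 0
  else if q = n + 1 then n - 1
  else if q = n + 2 then k - 1
  else n - (q - (n + 2)) + 1 - β (q - (n + 2))

/-- Yellow column projections: `s^Y_q = n − s^R_q − s^G_q`. -/
def gadgetSY (n k : ℕ) (α β : ℕ → ℕ) (q : ℕ) : ℕ :=
  n - gadgetSR n k α q - gadgetSG n k β q

/-- Feasibility of the gadget instance: there is a coloring `M` of the `n × (2n+2)` grid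
with colors `{R,G,Y}` realizing all prescribed row and column color counts. -/
def GadgetFeasible (n k u v : ℕ) (α β : ℕ → ℕ) : Prop :=
  ∃ M : ℕ → ℕ → Fin 3,
    (∀ i, 1 ≤ i → i ≤ n →
      ((Finset.Icc 1 (2 * n + 2)).filter (fun q => M i q = 0)).card = gadgetRR u v i ∧
      ((Finset.Icc 1 (2 * n + 2)).filter (fun q => M i q = 1)).card = gadgetRG u v i ∧
      ((Finset.Icc 1 (2 * n + 2)).filter (fun q => M i q = 2)).card = gadgetRY n u v i) ∧
    (∀ q, 1 ≤ q → q ≤ 2 * n + 2 →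
      ((Finset.Icc 1 n).filter (fun i => M i q = 0)).card = gadgetSR n k α q ∧
      ((Finset.Icc 1 n).filter (fun i => M i q = 1)).card = gadgetSG n k β q ∧
      ((Finset.Icc 1 n).filter (fun i => M i q = 2)).card = gadgetSY n k α β q)

/-!
Columns `n+1` and `n+2` contain no yellow cell, and row `i` has exactly `2i+1` non-yellow cells.
So inside the `2ℓ` columns `1,…,ℓ` and `n+3,…,n+2+ℓ`, row `i ≤ ℓ` has at least `2ℓ+1-2i`
yellow cells, at least `ℓ²` in total. Counted by columns instead, column `j` holds `j - α_j`
yellow cells and column `n+2+j` at most `j - 1 + β_j`, at most `ℓ² - ∑_{j≤ℓ} α_j + ∑_{j≤ℓ} β_j`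
in total.
-/

open Finset

lemma card_filter_eq_zero_add_card_filter_eq_one_add_card_filter_eq_two {ι : Type*}
    (s : Finset ι) (f : ι → Fin 3) :
    #{x ∈ s | f x = 0} + #{x ∈ s | f x = 1} + #{x ∈ s | f x = 2} = #s := by
  classical
  have := card_eq_sum_card_fiberwise (f := f) (s := s) (t := univ) (fun _ _ ↦ mem_univ _)
  rw [Fin.sum_univ_three] at this
  exact this.symm

lemma card_add_card_le_card_filter_add_card_filter_not {α : Type*} [DecidableEq α]
    {p : α → Prop} [DecidablePred p] {C D T : Finset α} (hCT : C ⊆ T) (hDT : D ⊆ T)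
    (hCD : Disjoint C D) (hD : ∀ x ∈ D, ¬ p x) :
    #C + #D ≤ #{x ∈ C | p x} + #{x ∈ T | ¬ p x} := by
  have hsub : {x ∈ C | ¬ p x} ∪ D ⊆ {x ∈ T | ¬ p x} :=
    union_subset (filter_subset_filter _ hCT) fun x hx ↦ mem_filter.2 ⟨hDT hx, hD x hx⟩
  have hdisj : Disjoint {x ∈ C | ¬ p x} D := disjoint_of_subset_left (filter_subset _ _) hCD
  have := card_le_card hsub
  rw [card_union_of_disjoint hdisj] at this
  have : #{x ∈ C | p x} + #{x ∈ C | ¬ p x} = #C := card_filter_add_card_filter_not p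
  omega

lemma two_mul_sum_Icc_one_id (ℓ : ℕ) : 2 * ∑ i ∈ Icc 1 ℓ, i = ℓ * (ℓ + 1) := by
  induction ℓ with
  | zero => simp
  | succ m ih =>
    rw [sum_Icc_succ_top (Nat.le_add_left 1 m), mul_add, ih]
    ring

lemma gadgetRR_add_gadgetRG (u v i : ℕ) : gadgetRR u v i + gadgetRG u v i = 2 * i + 1 := by
  unfold gadgetRR gadgetRG
  split_ifs <;> omega

lemma gadgetSY_add_one (n k : ℕ) (α β : ℕ → ℕ) : gadgetSY n k α β (n + 1) = 0 := by
  simp only [gadgetSY, gadgetSR, gadgetSG, if_neg (Nat.not_succ_le_self n), if_true]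
  omega

lemma gadgetSY_add_two (n k : ℕ) (α β : ℕ → ℕ) : gadgetSY n k α β (n + 2) = 0 := by
  simp only [gadgetSY, gadgetSR, gadgetSG, if_neg (show ¬ n + 2 ≤ n by omega),
    if_neg (show n + 2 ≠ n + 1 by omega), if_true]
  omega

lemma gadgetSR_of_le {n q : ℕ} (k : ℕ) (α : ℕ → ℕ) (hq : q ≤ n) :
    gadgetSR n k α q = n - q + α q := if_pos hq

lemma gadgetSG_of_le {n q : ℕ} (k : ℕ) (β : ℕ → ℕ) (hq : q ≤ n) :
    gadgetSG n k β q = 0 := if_pos hq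

lemma gadgetSR_add_two_add {j : ℕ} (n k : ℕ) (α : ℕ → ℕ) (hj : 1 ≤ j) :
    gadgetSR n k α (n + 2 + j) = 0 := by
  simp only [gadgetSR, if_neg (show ¬ n + 2 + j ≤ n by omega),
    if_neg (show n + 2 + j ≠ n + 1 by omega), if_neg (show n + 2 + j ≠ n + 2 by omega)]

lemma gadgetSG_add_two_add {j : ℕ} (n k : ℕ) (β : ℕ → ℕ) (hj : 1 ≤ j) :
    gadgetSG n k β (n + 2 + j) = n - j + 1 - β j := by
  simp only [gadgetSG, if_neg (show ¬ n + 2 + j ≤ n by omega),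
    if_neg (show n + 2 + j ≠ n + 1 by omega), if_neg (show n + 2 + j ≠ n + 2 by omega),
    Nat.add_sub_cancel_left]

def gadgetWindow (n ℓ : ℕ) : Finset ℕ := Icc 1 ℓ ∪ Icc (n + 2 + 1) (n + 2 + ℓ)

section Window

variable {n ℓ : ℕ}

lemma disjoint_Icc_Icc_add_two_add (hℓ : ℓ ≤ n) :
    Disjoint (Icc 1 ℓ) (Icc (n + 2 + 1) (n + 2 + ℓ)) := by
  simp only [disjoint_left, mem_Icc]
  omega

lemma card_gadgetWindow (hℓ : ℓ ≤ n) : #(gadgetWindow n ℓ) = 2 * ℓ := by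
  rw [gadgetWindow, card_union_of_disjoint (disjoint_Icc_Icc_add_two_add hℓ), Nat.card_Icc,
    Nat.card_Icc]
  omega

lemma gadgetWindow_subset (hℓ : ℓ ≤ n) : gadgetWindow n ℓ ⊆ Icc 1 (2 * n + 2) := by
  intro q
  simp only [gadgetWindow, mem_union, mem_Icc]
  omega

lemma disjoint_gadgetWindow (hℓ : ℓ ≤ n) : Disjoint (gadgetWindow n ℓ) {n + 1, n + 2} := by
  simp only [disjoint_left, gadgetWindow, mem_union, mem_Icc, mem_insert, mem_singleton]
  omega

lemma sum_gadgetWindow {M : Type*} [AddCommMonoid M] (f : ℕ → M) (hℓ : ℓ ≤ n) :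
    ∑ q ∈ gadgetWindow n ℓ, f q = ∑ j ∈ Icc 1 ℓ, (f j + f (n + 2 + j)) := by
  rw [gadgetWindow, sum_union (disjoint_Icc_Icc_add_two_add hℓ), ← map_add_left_Icc, sum_map,
    ← sum_add_distrib]
  rfl

end Window

/-- `GadgetFeasible n k u v α β` unfolds to `∃ M, IsGadgetColoring n k u v α β M`. -/
def IsGadgetColoring (n k u v : ℕ) (α β : ℕ → ℕ) (M : ℕ → ℕ → Fin 3) : Prop :=
  (∀ i, 1 ≤ i → i ≤ n →
    #{q ∈ Icc 1 (2 * n + 2) | M i q = 0} = gadgetRR u v i ∧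
    #{q ∈ Icc 1 (2 * n + 2) | M i q = 1} = gadgetRG u v i ∧
    #{q ∈ Icc 1 (2 * n + 2) | M i q = 2} = gadgetRY n u v i) ∧
  (∀ q, 1 ≤ q → q ≤ 2 * n + 2 →
    #{i ∈ Icc 1 n | M i q = 0} = gadgetSR n k α q ∧
    #{i ∈ Icc 1 n | M i q = 1} = gadgetSG n k β q ∧
    #{i ∈ Icc 1 n | M i q = 2} = gadgetSY n k α β q)

namespace IsGadgetColoring

variable {n k u v : ℕ} {α β : ℕ → ℕ} {M : ℕ → ℕ → Fin 3}

lemma card_row_ne_two (hM : IsGadgetColoring n k u v α β M) {i : ℕ} (hi : 1 ≤ i)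
    (hin : i ≤ n) : #{q ∈ Icc 1 (2 * n + 2) | M i q ≠ 2} = 2 * i + 1 := by
  obtain ⟨hR, hG, -⟩ := hM.1 i hi hin
  have := card_filter_eq_zero_add_card_filter_eq_one_add_card_filter_eq_two
    (Icc 1 (2 * n + 2)) (M i)
  have : #{q ∈ Icc 1 (2 * n + 2) | M i q = 2} + #{q ∈ Icc 1 (2 * n + 2) | M i q ≠ 2} =
      #(Icc 1 (2 * n + 2)) := card_filter_add_card_filter_not _
  have := gadgetRR_add_gadgetRG u v i
  omega

lemma ne_two_of_mem_pair (hM : IsGadgetColoring n k u v α β M) {i q : ℕ}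
    (hi : i ∈ Icc 1 n) (hq : q ∈ ({n + 1, n + 2} : Finset ℕ)) : M i q ≠ 2 := by
  have hY : gadgetSY n k α β q = 0 := by
    rcases mem_insert.1 hq with rfl | hq
    · exact gadgetSY_add_one n k α β
    · rw [mem_singleton.1 hq]
      exact gadgetSY_add_two n k α β
  have := (hM.2 q (by simp at hq; omega) (by simp at hq; omega)).2.2
  rw [hY, card_eq_zero, filter_eq_empty_iff] at this
  exact this hi

lemma card_col_eq_two_add_eq (hM : IsGadgetColoring n k u v α β M) {j : ℕ} (hj : 1 ≤ j)
    (hjn : j ≤ n) : #{i ∈ Icc 1 n | M i j = 2} + α j = j := by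
  obtain ⟨hR, hG, -⟩ := hM.2 j hj (by omega)
  rw [gadgetSR_of_le k α hjn] at hR
  rw [gadgetSG_of_le k β hjn] at hG
  have := card_filter_eq_zero_add_card_filter_eq_one_add_card_filter_eq_two (Icc 1 n) (M · j)
  simp only [Nat.card_Icc] at this
  omega

lemma card_col_add_two_add_eq_two_lt (hM : IsGadgetColoring n k u v α β M) {j : ℕ}
    (hj : 1 ≤ j) (hjn : j ≤ n) : #{i ∈ Icc 1 n | M i (n + 2 + j) = 2} < j + β j := by
  obtain ⟨hR, hG, -⟩ := hM.2 (n + 2 + j) (by omega) (by omega)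
  rw [gadgetSR_add_two_add n k α hj] at hR
  rw [gadgetSG_add_two_add n k β hj] at hG
  have := card_filter_eq_zero_add_card_filter_eq_one_add_card_filter_eq_two (Icc 1 n)
    (M · (n + 2 + j))
  simp only [Nat.card_Icc] at this
  omega

variable {ℓ : ℕ}

lemma two_mul_add_one_le_card_window_eq_two_add (hM : IsGadgetColoring n k u v α β M)
    (hℓ : ℓ ≤ n) {i : ℕ} (hi : 1 ≤ i) (hin : i ≤ n) : 2 * ℓ + 1 ≤ #{q ∈ gadgetWindow n ℓ | M i q = 2} + 2 * i := by
  have := card_add_card_le_card_filter_add_card_filter_not (p := (M i · = 2))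
    (gadgetWindow_subset hℓ) (by intro q; simp only [mem_insert, mem_singleton, mem_Icc]; omega)
    (disjoint_gadgetWindow hℓ)
    (fun q hq ↦ hM.ne_two_of_mem_pair (mem_Icc.2 ⟨hi, hin⟩) hq)
  rw [card_gadgetWindow hℓ, card_pair (by omega), hM.card_row_ne_two hi hin] at this
  omega

lemma mul_self_le_sum_card_window_eq_two (hM : IsGadgetColoring n k u v α β M) (hℓ : ℓ ≤ n) :
    ℓ * ℓ ≤ ∑ i ∈ Icc 1 n, #{q ∈ gadgetWindow n ℓ | M i q = 2} := by
  have hrows : ∑ i ∈ Icc 1 ℓ, (2 * ℓ + 1) ≤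
      ∑ i ∈ Icc 1 ℓ, (#{q ∈ gadgetWindow n ℓ | M i q = 2} + 2 * i) :=
    sum_le_sum fun i hi ↦ hM.two_mul_add_one_le_card_window_eq_two_add hℓ (mem_Icc.1 hi).1
      ((mem_Icc.1 hi).2.trans hℓ)
  rw [sum_const, Nat.card_Icc, Nat.add_sub_cancel, smul_eq_mul, sum_add_distrib, ← mul_sum,
    two_mul_sum_Icc_one_id] at hrows
  have := sum_le_sum_of_subset (f := fun i ↦ #{q ∈ gadgetWindow n ℓ | M i q = 2})
    (Icc_subset_Icc_right (a := 1) hℓ)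
  linarith

lemma sum_card_window_eq_two_add_le (hM : IsGadgetColoring n k u v α β M)
    (hℓ : ℓ ≤ n) :
    ∑ q ∈ gadgetWindow n ℓ, #{i ∈ Icc 1 n | M i q = 2} + ∑ j ∈ Icc 1 ℓ, α j + ℓ ≤
      ℓ * (ℓ + 1) + ∑ j ∈ Icc 1 ℓ, β j := by
  have hcols : ∑ j ∈ Icc 1 ℓ, ((#{i ∈ Icc 1 n | M i j = 2} + α j) +
      (#{i ∈ Icc 1 n | M i (n + 2 + j) = 2} + 1)) ≤ ∑ j ∈ Icc 1 ℓ, (j + (j + β j)) := by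
    refine sum_le_sum fun j hj ↦ ?_
    obtain ⟨hj, hjℓ⟩ := mem_Icc.1 hj
    have := hM.card_col_eq_two_add_eq hj (hjℓ.trans hℓ)
    have := hM.card_col_add_two_add_eq_two_lt hj (hjℓ.trans hℓ)
    omega
  simp only [sum_add_distrib, sum_const, Nat.card_Icc, smul_eq_mul] at hcols
  rw [sum_gadgetWindow _ hℓ, sum_add_distrib]
  have := two_mul_sum_Icc_one_id ℓ
  omega

end IsGadgetColoring

theorem stmt_10_general (n k u v : ℕ)
    (α β : ℕ → ℕ)
    (hfeas : GadgetFeasible n k u v α β) :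
    ∀ ℓ, 1 ≤ ℓ → ℓ ≤ n →
      ∑ j ∈ Finset.Icc 1 ℓ, α j ≤ ∑ j ∈ Finset.Icc 1 ℓ, β j := by
  obtain ⟨M, hM : IsGadgetColoring n k u v α β M⟩ := hfeas
  intro ℓ _ hℓ
  have hrows := hM.mul_self_le_sum_card_window_eq_two hℓ
  have hcols := hM.sum_card_window_eq_two_add_le hℓ
  have hcount : ∑ i ∈ Icc 1 n, #{q ∈ gadgetWindow n ℓ | M i q = 2} =
      ∑ q ∈ gadgetWindow n ℓ, #{i ∈ Icc 1 n | M i q = 2} :=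
    sum_card_bipartiteAbove_eq_sum_card_bipartiteBelow _
  linarith

/-- If the gadget instance is feasible, then `α ⪯ β` in the
dominance order. -/
theorem stmt_10 (n k u v : ℕ) (hk1 : 1 ≤ k) (hkn : k ≤ n)
    (hu : 1 ≤ u) (hun : u ≤ n) (hv : 1 ≤ v) (hvn : v ≤ n) (huv : u ≠ v)
    (α β : ℕ → ℕ)
    (hα01 : ∀ j, 1 ≤ j → j ≤ n → α j ≤ 1) (hβ01 : ∀ j, 1 ≤ j → j ≤ n → β j ≤ 1)
    (hαk : ∑ j ∈ Finset.Icc 1 n, α j = k) (hβk : ∑ j ∈ Finset.Icc 1 n, β j = k)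
    (hfeas : GadgetFeasible n k u v α β) :
    ∀ ℓ, 1 ≤ ℓ → ℓ ≤ n →
      ∑ j ∈ Finset.Icc 1 ℓ, α j ≤ ∑ j ∈ Finset.Icc 1 ℓ, β j :=
  stmt_10_general n k u v α β hfeas
end

section
/- Let r^R, r^G ∈ ℕ^m and s^R, s^G ∈ ℕ^n satisfy r^R_i + r^G_i ≤ n for all i, s^R_j + s^G_j ≤ m for all j, ∑_i r^R_i = ∑_j s^R_j, and ∑_i r^G_i = ∑_j s^G_j. Consider the vertex set V consisting of m row-vertices u_1,…,u_m and n column-vertices w_1,…,w_n. Then there exists a matrix M ∈ {R,G,Y}^{m×n} whose red row/column projections are (r^R, s^R) and whose green row/column projections are (r^G, s^G) if and only if there exist two disjoint sets E^R, E^G of unordered pairs of distinct vertices of V such that every vertex has red degree and green degree given by: deg_{E^R}(u_i) = r^R_i + (m−1) and deg_{E^G}(u_i) = r^G_i for 1 ≤ i ≤ m, and deg_{E^R}(w_j) = s^R_j and deg_{E^G}(w_j) = s^G_j + (n−1) for 1 ≤ j ≤ n. -/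
/-!
Given a solution `M`, take as red graph the complete graph on the rows together with the
row–column edges of the red cells, and as green graph the complete graph on the columns together
with the green cells. Conversely, a loopless red graph has at most `m - 1` red row–row edges at
each row vertex, so each row has at least `r^R_i` red row–column edges, while each column has
at most `s^R_j`. Both families count the same set of cross edges and `∑ r^R = ∑ s^R`, so all these
inequalities are equalities; likewise for green with rows and columns exchanged. Colouring cell
`(i, j)` by the colour of the edge `u_i w_j` (yellow if there is none) gives the solution.
-/

def edgeDeg {V : Type*} [DecidableEq V] (E : Finset (Sym2 V)) (v : V) : ℕ :=
  (E.filter (fun e => v ∈ e)).card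

open Finset

section EdgeDegree

variable {V : Type*} [DecidableEq V]

theorem edgeDeg_eq_card_filter_mk_mem [Fintype V] (E : Finset (Sym2 V)) (v : V) :
    edgeDeg E v = #{w | s(v, w) ∈ E} := by
  rw [edgeDeg, ← card_image_of_injective _ fun _ _ => (Sym2.congr_right (a := v)).mp]
  congr 1
  ext e
  simp only [mem_filter, mem_image, mem_univ, true_and]
  constructor
  · rintro ⟨he, hv⟩
    obtain ⟨w, rfl⟩ := Sym2.mem_iff_exists.mp hv
    exact ⟨w, he, rfl⟩
  · rintro ⟨w, hw, rfl⟩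
    exact ⟨hw, Sym2.mem_mk_left v w⟩

variable {α β : Type*} [Fintype α] [Fintype β] [DecidableEq α] [DecidableEq β]

theorem edgeDeg_inl (E : Finset (Sym2 (α ⊕ β))) (i : α) :
    edgeDeg E (.inl i) = #{a | s(.inl i, .inl a) ∈ E} + #{b | s(.inl i, .inr b) ∈ E} := by
  simp only [edgeDeg_eq_card_filter_mk_mem, card_filter, Fintype.sum_sum_type]

theorem edgeDeg_inr (E : Finset (Sym2 (α ⊕ β))) (j : β) :
    edgeDeg E (.inr j) = #{a | s(.inl a, .inr j) ∈ E} + #{b | s(.inr j, .inr b) ∈ E} := by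
  simp only [edgeDeg_eq_card_filter_mk_mem, card_filter, Fintype.sum_sum_type, Sym2.eq_swap]

end EdgeDegree

theorem card_filter_mk_mem_le {α V : Type*} [Fintype α] [DecidableEq α] [DecidableEq V]
    (E : Finset (Sym2 V)) (hE : ∀ e ∈ E, ¬ e.IsDiag) (f : α → V) (i : α) :
    #{a | s(f i, f a) ∈ E} ≤ Fintype.card α - 1 := by
  calc #{a | s(f i, f a) ∈ E} ≤ #(univ.erase i) := by
        refine card_le_card fun a ha => mem_erase.mpr ⟨?_, mem_univ a⟩
        rintro rfl
        exact hE _ (mem_filter.mp ha).2 (Sym2.mk_isDiag_iff.mpr rfl)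
    _ = Fintype.card α - 1 := by rw [card_erase_of_mem (mem_univ i), card_univ]

theorem card_filter_eq_of_le_of_sum_eq {α β : Type*} [Fintype α] [Fintype β]
    (R : α → β → Prop) [DecidableRel R] (r : α → ℕ) (s : β → ℕ)
    (hr : ∀ i, r i ≤ #{j | R i j}) (hs : ∀ j, #{i | R i j} ≤ s j) (hsum : ∑ i, r i = ∑ j, s j) :
    (∀ i, #{j | R i j} = r i) ∧ (∀ j, #{i | R i j} = s j) := by
  have hcount : ∑ i, #{j | R i j} = ∑ j, #{i | R i j} := by
    simp only [card_filter]
    exact sum_comm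
  have hrow := sum_le_sum fun i (_ : i ∈ univ) => hr i
  have hcol := sum_le_sum fun j (_ : j ∈ univ) => hs j
  refine ⟨fun i => ?_, fun j => ?_⟩
  · exact ((sum_eq_sum_iff_of_le fun i _ => hr i).mp (by omega) i (mem_univ i)).symm
  · exact (sum_eq_sum_iff_of_le fun j _ => hs j).mp (by omega) j (mem_univ j)

section CrossEdges

variable {α β : Type*} [Fintype α] [Fintype β] [DecidableEq α] [DecidableEq β]
  (E : Finset (Sym2 (α ⊕ β))) (hE : ∀ e ∈ E, ¬ e.IsDiag) (r : α → ℕ) (s : β → ℕ)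
include hE

theorem card_cross_eq_of_edgeDeg_inl_eq_add
    (hl : ∀ i, edgeDeg E (.inl i) = r i + (Fintype.card α - 1))
    (hr : ∀ j, edgeDeg E (.inr j) = s j) (hsum : ∑ i, r i = ∑ j, s j) :
    (∀ i, #{j | s(.inl i, .inr j) ∈ E} = r i) ∧ (∀ j, #{i | s(.inl i, .inr j) ∈ E} = s j) := by
  refine card_filter_eq_of_le_of_sum_eq _ r s (fun i => ?_) (fun j => ?_) hsum
  · have := card_filter_mk_mem_le E hE Sum.inl i
    have := edgeDeg_inl E i ▸ hl i
    omega
  · have := edgeDeg_inr E j ▸ hr j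
    omega

theorem card_cross_eq_of_edgeDeg_inr_eq_add
    (hl : ∀ i, edgeDeg E (.inl i) = r i)
    (hr : ∀ j, edgeDeg E (.inr j) = s j + (Fintype.card β - 1)) (hsum : ∑ i, r i = ∑ j, s j) :
    (∀ i, #{j | s(.inl i, .inr j) ∈ E} = r i) ∧ (∀ j, #{i | s(.inl i, .inr j) ∈ E} = s j) := by
  refine (card_filter_eq_of_le_of_sum_eq (fun j i => s(.inl i, .inr j) ∈ E) s r (fun j => ?_)
    (fun i => ?_) hsum.symm).symm
  · have := card_filter_mk_mem_le E hE Sum.inr j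
    have := edgeDeg_inr E j ▸ hr j
    omega
  · have := edgeDeg_inl E i ▸ hl i
    omega

end CrossEdges

namespace SimpleGraph

variable {α β : Type*}

def bipartiteJoin (A : SimpleGraph α) (B : SimpleGraph β) (R : α → β → Prop) :
    SimpleGraph (α ⊕ β) where
  Adj
    | .inl a, .inl a' => A.Adj a a'
    | .inr b, .inr b' => B.Adj b b'
    | .inl a, .inr b => R a b
    | .inr b, .inl a => R a b
  symm.symm
    | .inl _, .inl _ => A.adj_symm
    | .inr _, .inr _ => B.adj_symm
    | .inl _, .inr _ | .inr _, .inl _ => id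
  loopless.irrefl
    | .inl a => A.loopless.irrefl a
    | .inr b => B.loopless.irrefl b

variable {A A' : SimpleGraph α} {B B' : SimpleGraph β} {R R' : α → β → Prop}

@[simp] theorem bipartiteJoin_adj_inl_inl {a a' : α} :
    (bipartiteJoin A B R).Adj (.inl a) (.inl a') ↔ A.Adj a a' := .rfl

@[simp] theorem bipartiteJoin_adj_inr_inr {b b' : β} :
    (bipartiteJoin A B R).Adj (.inr b) (.inr b') ↔ B.Adj b b' := .rfl

@[simp] theorem bipartiteJoin_adj_inl_inr {a : α} {b : β} :
    (bipartiteJoin A B R).Adj (.inl a) (.inr b) ↔ R a b := .rfl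

@[simp] theorem bipartiteJoin_adj_inr_inl {a : α} {b : β} :
    (bipartiteJoin A B R).Adj (.inr b) (.inl a) ↔ R a b := .rfl

theorem disjoint_bipartiteJoin (hA : Disjoint A A') (hB : Disjoint B B')
    (hR : ∀ i j, R i j → ¬ R' i j) :
    Disjoint (bipartiteJoin A B R) (bipartiteJoin A' B' R') := by
  rw [disjoint_left] at hA hB ⊢
  rintro (a | b) (a' | b')
  exacts [hA a a', hR a b', fun h => hR a' b h, hB b b']

variable [DecidableRel A.Adj] [DecidableRel B.Adj] [DecidableRel R]

instance : DecidableRel (bipartiteJoin A B R).Adj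
  | .inl _, .inl _ => inferInstanceAs (Decidable (A.Adj _ _))
  | .inr _, .inr _ => inferInstanceAs (Decidable (B.Adj _ _))
  | .inl _, .inr _ => inferInstanceAs (Decidable (R _ _))
  | .inr _, .inl _ => inferInstanceAs (Decidable (R _ _))

variable [Fintype α] [Fintype β] [DecidableEq α] [DecidableEq β]

theorem edgeDeg_bipartiteJoin_inl (i : α) :
    edgeDeg (bipartiteJoin A B R).edgeFinset (.inl i) = A.degree i + #{j | R i j} := by
  simp [edgeDeg_inl, ← card_neighborFinset_eq_degree, neighborFinset_eq_filter]

theorem edgeDeg_bipartiteJoin_inr (j : β) :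
    edgeDeg (bipartiteJoin A B R).edgeFinset (.inr j) = #{i | R i j} + B.degree j := by
  simp [edgeDeg_inr, ← card_neighborFinset_eq_degree, neighborFinset_eq_filter]

end SimpleGraph

theorem exists_fin_three_coloring {α β : Type*} (R G : α → β → Prop) [DecidableRel R]
    [DecidableRel G] (h : ∀ i j, R i j → ¬ G i j) :
    ∃ M : α → β → Fin 3, (∀ i j, M i j = 0 ↔ R i j) ∧ (∀ i j, M i j = 1 ↔ G i j) :=
  ⟨fun i j => if R i j then 0 else if G i j then 1 else 2,
    fun i j => by dsimp only; split_ifs <;> simp_all,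
    fun i j => by dsimp only; split_ifs <;> simp_all⟩

theorem stmt_14_general (m n : ℕ) (rR rG : Fin m → ℕ) (sR sG : Fin n → ℕ)
    (hsumR : ∑ i, rR i = ∑ j, sR j) (hsumG : ∑ i, rG i = ∑ j, sG j) :
    (∃ M : Fin m → Fin n → Fin 3,
      (∀ i, (Finset.univ.filter (fun j => M i j = 0)).card = rR i) ∧
      (∀ i, (Finset.univ.filter (fun j => M i j = 1)).card = rG i) ∧
      (∀ j, (Finset.univ.filter (fun i => M i j = 0)).card = sR j) ∧
      (∀ j, (Finset.univ.filter (fun i => M i j = 1)).card = sG j)) ↔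
    (∃ ER EG : Finset (Sym2 (Fin m ⊕ Fin n)),
      (∀ e ∈ ER, ¬ e.IsDiag) ∧ (∀ e ∈ EG, ¬ e.IsDiag) ∧ Disjoint ER EG ∧
      (∀ i : Fin m, edgeDeg ER (Sum.inl i) = rR i + (m - 1)) ∧
      (∀ i : Fin m, edgeDeg EG (Sum.inl i) = rG i) ∧
      (∀ j : Fin n, edgeDeg ER (Sum.inr j) = sR j) ∧
      (∀ j : Fin n, edgeDeg EG (Sum.inr j) = sG j + (n - 1))) := by
  open SimpleGraph in
  constructor
  · rintro ⟨M, hR, hG, hR', hG'⟩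
    refine ⟨(bipartiteJoin ⊤ ⊥ fun i j => M i j = 0).edgeFinset,
      (bipartiteJoin ⊥ ⊤ fun i j => M i j = 1).edgeFinset,
      fun _ => not_isDiag_of_mem_edgeFinset, fun _ => not_isDiag_of_mem_edgeFinset,
      disjoint_edgeFinset.mpr (disjoint_bipartiteJoin disjoint_bot_right disjoint_bot_left
        fun i j h => by simp [h]), fun i => ?_, fun i => ?_, fun j => ?_, fun j => ?_⟩
    · rw [edgeDeg_bipartiteJoin_inl, complete_graph_degree, Fintype.card_fin, hR, add_comm]
    · rw [edgeDeg_bipartiteJoin_inl, bot_degree, hG, zero_add]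
    · rw [edgeDeg_bipartiteJoin_inr, bot_degree, hR', add_zero]
    · rw [edgeDeg_bipartiteJoin_inr, complete_graph_degree, Fintype.card_fin, hG']
  · rintro ⟨ER, EG, hER, hEG, hdisj, hRl, hGl, hRr, hGr⟩
    obtain ⟨hRrow, hRcol⟩ := card_cross_eq_of_edgeDeg_inl_eq_add ER hER rR sR
      (by simpa using hRl) hRr hsumR
    obtain ⟨hGrow, hGcol⟩ := card_cross_eq_of_edgeDeg_inr_eq_add EG hEG rG sG hGl
      (by simpa using hGr) hsumG
    obtain ⟨M, hM0, hM1⟩ := exists_fin_three_coloring (fun i j => s(.inl i, .inr j) ∈ ER)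
      (fun i j => s(.inl i, .inr j) ∈ EG) fun i j h => Finset.disjoint_left.mp hdisj h
    refine ⟨M, ?_⟩
    simp_rw [hM0, hM1]
    exact ⟨hRrow, hGrow, hRcol, hGcol⟩

/-- A 3-color tomography instance `(r^R, r^G, s^R, s^G)` (with
`r^R_i + r^G_i ≤ n`, `s^R_j + s^G_j ≤ m`, `∑ r^R = ∑ s^R`, `∑ r^G = ∑ s^G`) has a solution
`M ∈ {R,G,Y}^{m×n}` if and only if on the vertex set of `m` row-vertices and `n`
column-vertices there exist two disjoint edge sets `E^R, E^G` (sets of unordered pairs of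
distinct vertices) with red/green degrees `r^R_i + (m−1)` and `r^G_i` at row-vertex `u_i`,
and `s^R_j` and `s^G_j + (n−1)` at column-vertex `w_j`.
Colors are encoded in `Fin 3` with `0 = R`, `1 = G`, `2 = Y`; row-vertices are `Sum.inl i`
and column-vertices are `Sum.inr j`. -/
theorem stmt_14 (m n : ℕ) (rR rG : Fin m → ℕ) (sR sG : Fin n → ℕ)
    (hrow : ∀ i, rR i + rG i ≤ n) (hcol : ∀ j, sR j + sG j ≤ m)
    (hsumR : ∑ i, rR i = ∑ j, sR j) (hsumG : ∑ i, rG i = ∑ j, sG j) :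
    (∃ M : Fin m → Fin n → Fin 3,
      (∀ i, (Finset.univ.filter (fun j => M i j = 0)).card = rR i) ∧
      (∀ i, (Finset.univ.filter (fun j => M i j = 1)).card = rG i) ∧
      (∀ j, (Finset.univ.filter (fun i => M i j = 0)).card = sR j) ∧
      (∀ j, (Finset.univ.filter (fun i => M i j = 1)).card = sG j)) ↔
    (∃ ER EG : Finset (Sym2 (Fin m ⊕ Fin n)),
      (∀ e ∈ ER, ¬ e.IsDiag) ∧ (∀ e ∈ EG, ¬ e.IsDiag) ∧ Disjoint ER EG ∧
      (∀ i : Fin m, edgeDeg ER (Sum.inl i) = rR i + (m - 1)) ∧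
      (∀ i : Fin m, edgeDeg EG (Sum.inl i) = rG i) ∧
      (∀ j : Fin n, edgeDeg ER (Sum.inr j) = sR j) ∧
      (∀ j : Fin n, edgeDeg EG (Sum.inr j) = sG j + (n - 1))) :=
  stmt_14_general m n rR rG sR sG hsumR hsumG
end

section
/- Let r^R, r^G ∈ ℕ^m and s^R, s^G ∈ ℕ^n satisfy ∑_i r^R_i = ∑_j s^R_j and ∑_i r^G_i = ∑_j s^G_j, and let V consist of m row-vertices u_1,…,u_m and n column-vertices w_1,…,w_n. Suppose E^R, E^G are disjoint sets of unordered pairs of distinct vertices of V with deg_{E^R}(u_i) = r^R_i + (m−1), deg_{E^G}(u_i) = r^G_i, deg_{E^R}(w_j) = s^R_j, deg_{E^G}(w_j) = s^G_j + (n−1) for all i, j. Then {u_i, u_{i'}} ∈ E^R for every pair i ≠ i', {w_j, w_{j'}} ∈ E^G for every pair j ≠ j', E^R contains no pair of two column-vertices, and E^G contains no pair of two row-vertices. -/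
open Finset

section

variable {V : Type*} [DecidableEq V]

lemma two_mul_card_filter_sym2_not_isDiag (S : Finset V) :
    2 * #{e ∈ S.sym2 | ¬e.IsDiag} = #S * (#S - 1) := by
  rw [sym2_eq_image, Sym2.filter_image_mk_not_isDiag, Sym2.two_mul_card_image_offDiag,
    offDiag_card, Nat.mul_sub_one]

lemma sum_edgeDeg_eq_sum_card_filter_mem (S : Finset V) (E : Finset (Sym2 V)) :
    ∑ v ∈ S, edgeDeg E v = ∑ e ∈ E, #{v ∈ S | v ∈ e} := by
  simp only [edgeDeg, card_filter]
  exact sum_comm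

lemma card_filter_mem_mk (S : Finset V) {x y : V} (h : x ≠ y) :
    #{v ∈ S | v ∈ s(x, y)} = (if x ∈ S then 1 else 0) + (if y ∈ S then 1 else 0) := by
  have : ({v ∈ S | v ∈ s(x, y)} : Finset V) = ({x, y} : Finset V).filter (· ∈ S) := by
    ext v; simp [and_comm, Sym2.mem_iff]
  rw [this, filter_insert, filter_singleton]
  split_ifs <;> simp [h]

variable [Fintype V]

lemma card_filter_mem_le (S : Finset V) {e : Sym2 V} (he : ¬e.IsDiag) :
    #{v ∈ S | v ∈ e} ≤ #{v ∈ Sᶜ | v ∈ e} + if e ∈ S.sym2 then 2 else 0 := by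
  induction e using Sym2.ind with
  | _ x y =>
    have hxy : x ≠ y := by simpa using he
    rw [card_filter_mem_mk S hxy, card_filter_mem_mk Sᶜ hxy]
    simp only [mk_mem_sym2_iff, mem_compl]
    split_ifs <;> simp_all

lemma card_filter_mem_lt (S : Finset V) {x y : V} (hx : x ∉ S) (hy : y ∉ S) (hxy : x ≠ y) :
    #{v ∈ S | v ∈ s(x, y)} < #{v ∈ Sᶜ | v ∈ s(x, y)} := by
  rw [card_filter_mem_mk S hxy, card_filter_mem_mk Sᶜ hxy]
  simp [hx, hy]

theorem forall_mk_mem_and_forall_mk_not_mem_of_sum_edgeDeg_le (S : Finset V)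
    (E : Finset (Sym2 V)) (hE : ∀ e ∈ E, ¬e.IsDiag)
    (hdeg : ∑ v ∈ Sᶜ, edgeDeg E v + #S * (#S - 1) ≤ ∑ v ∈ S, edgeDeg E v) :
    (∀ x ∈ S, ∀ y ∈ S, x ≠ y → s(x, y) ∈ E) ∧ (∀ x ∉ S, ∀ y ∉ S, s(x, y) ∉ E) := by
  set P := {e ∈ S.sym2 | ¬e.IsDiag}
  have hP : 2 * #P = #S * (#S - 1) := two_mul_card_filter_sym2_not_isDiag S
  have hEP : E ∩ S.sym2 ⊆ P := fun e he =>
    mem_filter.2 ⟨(mem_inter.1 he).2, hE e (mem_inter.1 he).1⟩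
  have hind : ∑ e ∈ E, (if e ∈ S.sym2 then 2 else 0) = 2 * #(E ∩ S.sym2) := by
    rw [sum_ite_mem, sum_const, smul_eq_mul, mul_comm]
  have hbound : ∑ e ∈ E, #{v ∈ S | v ∈ e} ≤
      ∑ e ∈ E, (#{v ∈ Sᶜ | v ∈ e} + if e ∈ S.sym2 then 2 else 0) :=
    sum_le_sum fun e he => card_filter_mem_le S (hE e he)
  rw [sum_edgeDeg_eq_sum_card_filter_mem, sum_edgeDeg_eq_sum_card_filter_mem] at hdeg
  rw [sum_add_distrib, hind] at hbound
  have hcard : #P ≤ #(E ∩ S.sym2) := by omega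
  have hPE : P ⊆ E := (eq_of_subset_of_card_le hEP hcard) ▸ inter_subset_left
  refine ⟨fun x hx y hy hxy => hPE ?_, fun x hx y hy hxyE => ?_⟩
  · simp [P, hx, hy, hxy]
  · have hxy : x ≠ y := fun h => hE _ hxyE (h ▸ Sym2.mk_isDiag_iff.2 rfl)
    have htight := (sum_eq_sum_iff_of_le fun e he => card_filter_mem_le S (hE e he)).1
      (by rw [sum_add_distrib, hind]; have := card_le_card hEP; omega) _ hxyE
    have hout : s(x, y) ∉ S.sym2 := by simp [hx]
    rw [if_neg hout, add_zero] at htight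
    exact (card_filter_mem_lt S hx hy hxy).ne htight

end

section

variable {α β : Type*} [Fintype α] [Fintype β] [DecidableEq α] [DecidableEq β]

lemma Finset.compl_map_inl :
    (univ.map (Function.Embedding.inl : α ↪ α ⊕ β))ᶜ = univ.map .inr := by
  ext (a | b) <;> simp

lemma Finset.compl_map_inr :
    (univ.map (Function.Embedding.inr : β ↪ α ⊕ β))ᶜ = univ.map .inl := by
  ext (a | b) <;> simp

end

theorem stmt_15_general (m n : ℕ) (rR rG : Fin m → ℕ) (sR sG : Fin n → ℕ)
    (hsumR : ∑ i, rR i = ∑ j, sR j) (hsumG : ∑ i, rG i = ∑ j, sG j)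
    (ER EG : Finset (Sym2 (Fin m ⊕ Fin n)))
    (hERnd : ∀ e ∈ ER, ¬ e.IsDiag) (hEGnd : ∀ e ∈ EG, ¬ e.IsDiag)
    (hdR : ∀ i : Fin m, edgeDeg ER (Sum.inl i) = rR i + (m - 1))
    (hdG : ∀ i : Fin m, edgeDeg EG (Sum.inl i) = rG i)
    (hdR' : ∀ j : Fin n, edgeDeg ER (Sum.inr j) = sR j)
    (hdG' : ∀ j : Fin n, edgeDeg EG (Sum.inr j) = sG j + (n - 1)) :
    (∀ i i' : Fin m, i ≠ i' →
      s((Sum.inl i : Fin m ⊕ Fin n), Sum.inl i') ∈ ER) ∧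
    (∀ j j' : Fin n, j ≠ j' →
      s((Sum.inr j : Fin m ⊕ Fin n), Sum.inr j') ∈ EG) ∧
    (∀ j j' : Fin n, s((Sum.inr j : Fin m ⊕ Fin n), Sum.inr j') ∉ ER) ∧
    (∀ i i' : Fin m, s((Sum.inl i : Fin m ⊕ Fin n), Sum.inl i') ∉ EG) := by
  obtain ⟨hRrows, hRcols⟩ := forall_mk_mem_and_forall_mk_not_mem_of_sum_edgeDeg_le
    (univ.map .inl) ER hERnd <| by
      simp [compl_map_inl, hdR, hdR', sum_add_distrib, hsumR]
  obtain ⟨hGcols, hGrows⟩ := forall_mk_mem_and_forall_mk_not_mem_of_sum_edgeDeg_le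
    (univ.map .inr) EG hEGnd <| by
      simp [compl_map_inr, hdG, hdG', sum_add_distrib, hsumG]
  exact ⟨fun i i' h => hRrows _ (by simp) _ (by simp) (Sum.inl_injective.ne h),
    fun j j' h => hGcols _ (by simp) _ (by simp) (Sum.inr_injective.ne h),
    fun j j' => hRcols _ (by simp) _ (by simp), fun i i' => hGrows _ (by simp) _ (by simp)⟩

/-- If disjoint edge sets `E^R, E^G` on the vertex set of `m` row-vertices
`u_i = Sum.inl i` and `n` column-vertices `w_j = Sum.inr j` realize the degrees
`deg_{E^R}(u_i) = r^R_i + (m−1)`, `deg_{E^G}(u_i) = r^G_i`, `deg_{E^R}(w_j) = s^R_j`,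
`deg_{E^G}(w_j) = s^G_j + (n−1)`, where `∑ r^R = ∑ s^R` and `∑ r^G = ∑ s^G`, then `E^R`
contains all pairs of distinct row-vertices and no pair of column-vertices, and `E^G`
contains all pairs of distinct column-vertices and no pair of row-vertices. -/
theorem stmt_15 (m n : ℕ) (rR rG : Fin m → ℕ) (sR sG : Fin n → ℕ)
    (hsumR : ∑ i, rR i = ∑ j, sR j) (hsumG : ∑ i, rG i = ∑ j, sG j)
    (ER EG : Finset (Sym2 (Fin m ⊕ Fin n)))
    (hERnd : ∀ e ∈ ER, ¬ e.IsDiag) (hEGnd : ∀ e ∈ EG, ¬ e.IsDiag)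
    (hdisj : Disjoint ER EG)
    (hdR : ∀ i : Fin m, edgeDeg ER (Sum.inl i) = rR i + (m - 1))
    (hdG : ∀ i : Fin m, edgeDeg EG (Sum.inl i) = rG i)
    (hdR' : ∀ j : Fin n, edgeDeg ER (Sum.inr j) = sR j)
    (hdG' : ∀ j : Fin n, edgeDeg EG (Sum.inr j) = sG j + (n - 1)) :
    (∀ i i' : Fin m, i ≠ i' →
      s((Sum.inl i : Fin m ⊕ Fin n), Sum.inl i') ∈ ER) ∧
    (∀ j j' : Fin n, j ≠ j' →
      s((Sum.inr j : Fin m ⊕ Fin n), Sum.inr j') ∈ EG) ∧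
    (∀ j j' : Fin n, s((Sum.inr j : Fin m ⊕ Fin n), Sum.inr j') ∉ ER) ∧
    (∀ i i' : Fin m, s((Sum.inl i : Fin m ⊕ Fin n), Sum.inl i') ∉ EG) :=
  stmt_15_general m n rR rG sR sG hsumR hsumG ER EG hERnd hEGnd hdR hdG hdR' hdG'
end
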